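/- arXiv:1310.7240 — 2 statements merged into one kernel-verified Lean document; each statement's English description precedes it below -/
import Mathlib

section
/- Let n = (n_1,…,n_p) be a composition and for l ∈ ℤ_{≥0} let k(l), a(l), r(l) denote its block index, type and offset with respect to n. Fix l ∈ ℤ_{≥0} and a ∈ {1,…,p}, and suppose the set {m : 0 ≤ m ≤ l, a(m) = a} is nonempty; denote by l_{−,a} its largest element. Then: if a < a(l), l_{−,a} = k(l)|n| + n_1 + ⋯ + n_a − 1; if a = a(l), l_{−,a} = l; and if a > a(l) (which forces k(l) ≥ 1), l_{−,a} = k(l)|n| − (n_{a+1} + ⋯ + n_p) − 1. -/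
/-!
Positions of type `a` are exactly the integers whose residue modulo `|n|` lies in the window
`[n_1 + ⋯ + n_{a-1}, n_1 + ⋯ + n_a)`, because these windows for different `a` are disjoint.
Hence the positions of type `a` form one run per block, and `l_{−,a}` is the last entry of the
run in block `k(l)` when `a < a(l)` and of the run in block `k(l) - 1` when `a > a(l)`.
-/

open Finset

section PartialSums

variable {ι : Type*} [LinearOrder ι] [LocallyFiniteOrderBot ι] (n : ι → ℕ)

theorem sum_Iic_le_sum_Iio {a b : ι} (h : a < b) :
    ∑ i ∈ Iic a, n i ≤ ∑ i ∈ Iio b, n i :=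
  sum_le_sum_of_subset fun _ hi => mem_Iio.2 ((mem_Iic.1 hi).trans_lt h)

theorem eq_of_sum_Iio_add_eq {a b : ι} {r s : ℕ} (hr : r < n a) (hs : s < n b)
    (h : ∑ i ∈ Iio a, n i + r = ∑ i ∈ Iio b, n i + s) : a = b := by
  have hwin := fun c => sum_Iio_add_eq_sum_Iic (f := n) c
  rcases lt_trichotomy a b with hab | rfl | hba
  · have := sum_Iic_le_sum_Iio n hab
    have := hwin a
    omega
  · rfl
  · have := sum_Iic_le_sum_Iio n hba
    have := hwin b
    omega

variable [Fintype ι] [LocallyFiniteOrderTop ι]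

theorem sum_Iic_add_sum_Ioi (a : ι) :
    ∑ i ∈ Iic a, n i + ∑ i ∈ Ioi a, n i = ∑ i, n i := by
  rw [← sum_union (disjoint_left.2 fun _ hi hi' => (mem_Iic.1 hi).not_gt (mem_Ioi.1 hi'))]
  congr
  ext i
  simp [le_or_gt]

theorem sum_Iio_add_lt_sum {a : ι} {r : ℕ} (hr : r < n a) :
    ∑ i ∈ Iio a, n i + r < ∑ i, n i := by
  have := sum_Iio_add_eq_sum_Iic (f := n) a
  have := sum_Iic_add_sum_Ioi n a
  omega

end PartialSums

def IsBlockDecomposition {ι : Type*} [LinearOrder ι] [LocallyFiniteOrderBot ι] [Fintype ι]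
    (n : ι → ℕ) (kk : ℕ → ℕ) (aa : ℕ → ι) (rr : ℕ → ℕ) : Prop :=
  ∀ l, rr l < n (aa l) ∧ l = kk l * ∑ b, n b + ∑ i ∈ Iio (aa l), n i + rr l

namespace IsBlockDecomposition

variable {ι : Type*} [LinearOrder ι] [LocallyFiniteOrderBot ι] [Fintype ι]
  {n : ι → ℕ} {kk : ℕ → ℕ} {aa : ℕ → ι} {rr : ℕ → ℕ}

theorem pos_of_isGreatest (hD : IsBlockDecomposition n kk aa rr) {l lma : ℕ} {a : ι}
    (hG : IsGreatest {m | m ≤ l ∧ aa m = a} lma) : 0 < n a :=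
  hG.1.2 ▸ Nat.zero_lt_of_lt (hD lma).1

variable [LocallyFiniteOrderTop ι]

theorem type_eq_of_eq (hD : IsBlockDecomposition n kk aa rr) {m k r : ℕ} {a : ι} (hr : r < n a)
    (hm : m = k * ∑ b, n b + ∑ i ∈ Iio a, n i + r) : aa m = a := by
  obtain ⟨hrm, hdm⟩ := hD m
  have hmod : ∀ {k r : ℕ} {c : ι}, r < n c →
      (k * ∑ b, n b + ∑ i ∈ Iio c, n i + r) % ∑ b, n b = ∑ i ∈ Iio c, n i + r :=
    fun hr => by
      rw [add_assoc, Nat.mul_add_mod_self_right, Nat.mod_eq_of_lt (sum_Iio_add_lt_sum n hr)]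
  refine eq_of_sum_Iio_add_eq n hrm hr ?_
  rw [← hmod hrm, ← hmod hr, ← hdm, ← hm]

theorem add_one_le_of_type_eq (hD : IsBlockDecomposition n kk aa rr) {m K : ℕ} {a : ι}
    (ha : aa m = a) (hm : m < K * ∑ b, n b + ∑ b, n b + ∑ i ∈ Iio a, n i) :
    m + 1 ≤ K * ∑ b, n b + ∑ i ∈ Iic a, n i := by
  obtain ⟨hr, hdm⟩ := hD m
  subst ha
  have hk : kk m ≤ K := by
    rw [← Nat.lt_succ_iff, ← Nat.mul_lt_mul_right (Nat.zero_lt_of_lt (sum_Iio_add_lt_sum n hr)),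
      Nat.succ_mul]
    omega
  have := Nat.mul_le_mul_right (∑ b, n b) hk
  have := sum_Iio_add_eq_sum_Iic (f := n) (aa m)
  omega

theorem isGreatest_of_bounds (hD : IsBlockDecomposition n kk aa rr) {l K : ℕ} {a : ι}
    (ha : 0 < n a) (hlo : K * ∑ b, n b + ∑ i ∈ Iic a, n i ≤ l + 1)
    (hhi : l < K * ∑ b, n b + ∑ b, n b + ∑ i ∈ Iio a, n i) :
    IsGreatest {m | m ≤ l ∧ aa m = a} (K * ∑ b, n b + ∑ i ∈ Iic a, n i - 1) := by
  have := sum_Iio_add_eq_sum_Iic (f := n) a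
  refine ⟨⟨by omega, hD.type_eq_of_eq (k := K) (r := n a - 1) (by omega) (by omega)⟩, ?_⟩
  rintro m ⟨hml, hma⟩
  have := hD.add_one_le_of_type_eq (K := K) hma (by omega)
  omega

theorem eq_of_isGreatest_of_lt (hD : IsBlockDecomposition n kk aa rr) {l lma : ℕ} {a : ι}
    (hG : IsGreatest {m | m ≤ l ∧ aa m = a} lma) (h : a < aa l) :
    lma + 1 = kk l * ∑ b, n b + ∑ i ∈ Iic a, n i := by
  obtain ⟨hr, hl⟩ := hD l
  have ha := hD.pos_of_isGreatest hG
  have := sum_Iic_le_sum_Iio n h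
  have := sum_Iio_add_lt_sum n hr
  have := sum_Iio_add_eq_sum_Iic (f := n) a
  have := hG.unique (hD.isGreatest_of_bounds (K := kk l) ha (by omega) (by omega))
  omega

theorem eq_of_isGreatest_of_gt (hD : IsBlockDecomposition n kk aa rr) {l lma : ℕ} {a : ι}
    (hG : IsGreatest {m | m ≤ l ∧ aa m = a} lma) (h : aa l < a) :
    1 ≤ kk l ∧ lma + ∑ i ∈ Ioi a, n i + 1 = kk l * ∑ b, n b := by
  obtain ⟨hr, hl⟩ := hD l
  have := sum_Iio_add_eq_sum_Iic (f := n) (aa l)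
  have := sum_Iic_le_sum_Iio n h
  obtain ⟨K, hK⟩ : ∃ K, kk l = K + 1 := by
    refine Nat.exists_eq_add_one.2 (Nat.pos_of_ne_zero fun h0 => ?_)
    obtain ⟨hlma, hlmaa⟩ := hG.1
    obtain ⟨-, hdm⟩ := hD lma
    rw [h0, zero_mul] at hl
    rw [hlmaa] at hdm
    omega
  rw [hK, add_one_mul] at hl ⊢
  have := sum_Iio_add_eq_sum_Iic (f := n) a
  have := sum_Iic_add_sum_Ioi n a
  have := hG.unique (hD.isGreatest_of_bounds (K := K) (hD.pos_of_isGreatest hG) (by omega)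
    (by omega))
  omega

end IsBlockDecomposition

theorem stmt_5_general (p : ℕ) (n : Fin p → ℕ)
    (kk : ℕ → ℕ) (aa : ℕ → Fin p) (rr : ℕ → ℕ)
    (hdec : ∀ l, rr l < n (aa l) ∧
      l = kk l * (∑ b, n b) +
          (∑ i ∈ Finset.univ.filter (fun i => i < aa l), n i) + rr l)
    (l : ℕ) (a : Fin p)
    (lma : ℕ)
    (hlma : lma ≤ l ∧ aa lma = a ∧ ∀ i ≤ l, aa i = a → i ≤ lma) :
    (a < aa l →
      lma + 1 = kk l * (∑ b, n b) + ∑ i ∈ Finset.univ.filter (fun i => i ≤ a), n i) ∧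
    (a = aa l → lma = l) ∧
    (aa l < a →
      1 ≤ kk l ∧
      lma + (∑ i ∈ Finset.univ.filter (fun i => a < i), n i) + 1 = kk l * (∑ b, n b)) := by
  have hD : IsBlockDecomposition n kk aa rr := fun l => by
    simpa only [filter_gt_eq_Iio] using hdec l
  obtain ⟨hlmal, hlmaa, hlmamax⟩ := hlma
  have hG : IsGreatest {m | m ≤ l ∧ aa m = a} lma :=
    ⟨⟨hlmal, hlmaa⟩, fun m hm => hlmamax m hm.1 hm.2⟩
  simp only [filter_ge_eq_Iic, filter_lt_eq_Ioi]
  exact ⟨hD.eq_of_isGreatest_of_lt hG, fun h => le_antisymm hlmal (hlmamax l le_rfl h.symm),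
    hD.eq_of_isGreatest_of_gt hG⟩

/-- Explicit formula for `l_{−,a}`, the largest integer `m ≤ l` of type `a`
with respect to a composition `n` (when it exists). -/
theorem stmt_5 (p : ℕ) (hp : 1 ≤ p) (n : Fin p → ℕ) (hn : ∀ a, 1 ≤ n a)
    (kk : ℕ → ℕ) (aa : ℕ → Fin p) (rr : ℕ → ℕ)
    (hdec : ∀ l, rr l < n (aa l) ∧
      l = kk l * (∑ b, n b) +
          (∑ i ∈ Finset.univ.filter (fun i => i < aa l), n i) + rr l)
    (l : ℕ) (a : Fin p)
    (hne : ∃ i ≤ l, aa i = a)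
    (lma : ℕ)
    (hlma : lma ≤ l ∧ aa lma = a ∧ ∀ i ≤ l, aa i = a → i ≤ lma) :
    (a < aa l →
      lma + 1 = kk l * (∑ b, n b) + ∑ i ∈ Finset.univ.filter (fun i => i ≤ a), n i) ∧
    (a = aa l → lma = l) ∧
    (aa l < a →
      1 ≤ kk l ∧
      lma + (∑ i ∈ Finset.univ.filter (fun i => a < i), n i) + 1 = kk l * (∑ b, n b)) :=
  stmt_5_general p n kk aa rr hdec l a lma hlma
end

section
/- Let n = (n_1,…,n_p) be a composition and for l ∈ ℤ_{≥0} let k(l), a(l), r(l) denote its block index, type and offset with respect to n. For l ∈ ℤ_{≥0} let σ(l) denote the smallest integer m ≥ l+1 with a(m) = a(l). Then k(σ(l))·n_{a(σ(l))} + r(σ(l)) = k(l)·n_{a(l)} + r(l) + 1. Consequently, the shift matrix Υ defined by Υ_{l,j} = δ_{j,σ(l)} satisfies (Υχ)(x) = x·χ(x) componentwise, where χ is the monomial string χ^{(l)}(x) = x^{k(l)·n_{a(l)} + r(l)}. -/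
/-!
Within one type `a`, the integers `l = k·|n| + (n_1 + ⋯ + n_{a-1}) + r` with `r < n_a` and the
exponents `k·n_a + r` are both ordered lexicographically by `(k, r)`, so the exponent is an order
isomorphism from the integers of type `a` onto `ℕ`. The shift `σ(l)` is the successor of `l` in
that order, hence its exponent is the successor of the exponent of `l`.
-/

open Finset

theorem mul_add_lt_mul_add_iff_lex {N k k' r r' : ℕ} (hr : r < N) (hr' : r' < N) :
    k * N + r < k' * N + r' ↔ k < k' ∨ k = k' ∧ r < r' := by
  rcases lt_trichotomy k k' with hk | rfl | hk
  · have : (k + 1) * N ≤ k' * N := Nat.mul_le_mul_right N hk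
    rw [add_mul, one_mul] at this
    omega
  · omega
  · have : (k' + 1) * N ≤ k * N := Nat.mul_le_mul_right N hk
    rw [add_mul, one_mul] at this
    omega

theorem eq_and_eq_of_mul_add_eq_mul_add {N k k' r r' : ℕ} (hr : r < N) (hr' : r' < N)
    (h : k * N + r = k' * N + r') : k = k' ∧ r = r' := by
  have := (mul_add_lt_mul_add_iff_lex (k := k) (k' := k') hr hr').not
  have := (mul_add_lt_mul_add_iff_lex (k := k') (k' := k) hr' hr).not
  omega

section Composition

variable {p : ℕ} (n : Fin p → ℕ)

def blockStart (a : Fin p) : ℕ := ∑ i ∈ univ.filter (fun i => i < a), n i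

theorem blockStart_add_self (a : Fin p) :
    blockStart n a + n a = ∑ i ∈ univ.filter (fun i => i ≤ a), n i := by
  rw [blockStart, add_comm, ← sum_insert (by simp)]
  congr 1
  ext i
  simp [le_iff_lt_or_eq, or_comm]

theorem blockStart_add_le_sum (a : Fin p) : blockStart n a + n a ≤ ∑ b, n b := by
  rw [blockStart_add_self]
  exact sum_le_sum_of_subset (subset_univ _)

theorem blockStart_add_le_blockStart {a a' : Fin p} (h : a < a') :
    blockStart n a + n a ≤ blockStart n a' := by
  rw [blockStart_add_self]
  refine sum_le_sum_of_subset fun i hi => ?_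
  simp only [mem_filter, mem_univ, true_and] at hi ⊢
  exact hi.trans_lt h

/-- `kk l`, `aa l`, `rr l` are the block index `k(l)`, type `a(l)` and offset `r(l)` of `l`. -/
def IsBlockDecomp (kk : ℕ → ℕ) (aa : ℕ → Fin p) (rr : ℕ → ℕ) : Prop :=
  ∀ l, rr l < n (aa l) ∧ l = kk l * (∑ b, n b) + blockStart n (aa l) + rr l

variable {n} {kk : ℕ → ℕ} {aa : ℕ → Fin p} {rr : ℕ → ℕ}

theorem IsBlockDecomp.unique (hdec : IsBlockDecomp n kk aa rr) {m k r : ℕ} {a : Fin p}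
    (hr : r < n a) (hm : m = k * (∑ b, n b) + blockStart n a + r) :
    kk m = k ∧ aa m = a ∧ rr m = r := by
  obtain ⟨hrm, hm'⟩ := hdec m
  have hlt := blockStart_add_le_sum n a
  have hltm := blockStart_add_le_sum n (aa m)
  obtain ⟨hk, hrem⟩ := eq_and_eq_of_mul_add_eq_mul_add (k := kk m) (k' := k)
    (by omega : blockStart n (aa m) + rr m < ∑ b, n b)
    (by omega : blockStart n a + r < ∑ b, n b) (by omega)
  have ha : aa m = a := by
    rcases lt_trichotomy (aa m) a with h | h | h
    · have := blockStart_add_le_blockStart n h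
      omega
    · exact h
    · have := blockStart_add_le_blockStart n h
      omega
  refine ⟨hk, ha, ?_⟩
  subst ha
  omega

theorem IsBlockDecomp.lt_iff_exponent_lt (hdec : IsBlockDecomp n kk aa rr) {l m : ℕ}
    (h : aa l = aa m) : l < m ↔ kk l * n (aa l) + rr l < kk m * n (aa m) + rr m := by
  obtain ⟨hrl, hl⟩ := hdec l
  obtain ⟨hrm, hm⟩ := hdec m
  have hN := blockStart_add_le_sum n (aa l)
  rw [← h] at hrm hm ⊢
  calc l < m ↔ kk l * (∑ b, n b) + rr l < kk m * (∑ b, n b) + rr m := by omega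
    _ ↔ kk l < kk m ∨ kk l = kk m ∧ rr l < rr m := mul_add_lt_mul_add_iff_lex (by omega) (by omega)
    _ ↔ _ := (mul_add_lt_mul_add_iff_lex hrl hrm).symm

theorem IsBlockDecomp.exists_exponent_eq (hdec : IsBlockDecomp n kk aa rr) {a : Fin p}
    (ha : 0 < n a) (e : ℕ) : ∃ m, aa m = a ∧ kk m * n a + rr m = e := by
  obtain ⟨hk, htype, hr⟩ := hdec.unique (Nat.mod_lt e ha)
    (m := e / n a * (∑ b, n b) + blockStart n a + e % n a) rfl
  exact ⟨_, htype, by rw [hk, hr, Nat.div_add_mod']⟩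

end Composition

theorem stmt_7_general (p : ℕ) (n : Fin p → ℕ)
    (kk : ℕ → ℕ) (aa : ℕ → Fin p) (rr : ℕ → ℕ)
    (hdec : ∀ l, rr l < n (aa l) ∧
      l = kk l * (∑ b, n b) +
          (∑ i ∈ Finset.univ.filter (fun i => i < aa l), n i) + rr l)
    (σ : ℕ → ℕ)
    (hσ : ∀ l, l + 1 ≤ σ l ∧ aa (σ l) = aa l ∧
      ∀ m, l + 1 ≤ m → aa m = aa l → σ l ≤ m)
    (l : ℕ) :
    kk (σ l) * n (aa (σ l)) + rr (σ l) = kk l * n (aa l) + rr l + 1 ∧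
    ∀ x : ℝ, x ^ (kk (σ l) * n (aa (σ l)) + rr (σ l)) = x * x ^ (kk l * n (aa l) + rr l) := by
  have hdec : IsBlockDecomp n kk aa rr := hdec
  obtain ⟨hσ_gt, hσ_type, hσ_min⟩ := hσ l
  obtain ⟨m, hm_type, hm_exp⟩ :=
    hdec.exists_exponent_eq ((Nat.zero_le _).trans_lt (hdec l).1) (kk l * n (aa l) + rr l + 1)
  have hlm : l < m := (hdec.lt_iff_exponent_lt hm_type.symm).2 (by rw [hm_type]; omega)
  have hσ_le : σ l ≤ m := hσ_min m hlm hm_type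
  have hlower := (hdec.lt_iff_exponent_lt hσ_type.symm).1 hσ_gt
  have hupper := (hdec.lt_iff_exponent_lt (hm_type.trans hσ_type.symm)).not.1 hσ_le.not_gt
  have hexp : kk (σ l) * n (aa (σ l)) + rr (σ l) = kk l * n (aa l) + rr l + 1 := by
    rw [hm_type] at hupper
    omega
  exact ⟨hexp, fun x => by rw [hexp, pow_succ, mul_comm]⟩

/-- The shift map `σ(l) = min{m ≥ l+1 : a(m) = a(l)}` raises the exponent of the
monomial string by one: `k(σ(l))·n_{a(σ(l))} + r(σ(l)) = k(l)·n_{a(l)} + r(l) + 1`;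
consequently the shift matrix `Υ` satisfies `(Υχ)(x) = x·χ(x)` componentwise. -/
theorem stmt_7 (p : ℕ) (hp : 1 ≤ p) (n : Fin p → ℕ) (hn : ∀ a, 1 ≤ n a)
    (kk : ℕ → ℕ) (aa : ℕ → Fin p) (rr : ℕ → ℕ)
    (hdec : ∀ l, rr l < n (aa l) ∧
      l = kk l * (∑ b, n b) +
          (∑ i ∈ Finset.univ.filter (fun i => i < aa l), n i) + rr l)
    (σ : ℕ → ℕ)
    (hσ : ∀ l, l + 1 ≤ σ l ∧ aa (σ l) = aa l ∧
      ∀ m, l + 1 ≤ m → aa m = aa l → σ l ≤ m)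
    (l : ℕ) :
    kk (σ l) * n (aa (σ l)) + rr (σ l) = kk l * n (aa l) + rr l + 1 ∧
    ∀ x : ℝ, x ^ (kk (σ l) * n (aa (σ l)) + rr (σ l)) = x * x ^ (kk l * n (aa l) + rr l) :=
  stmt_7_general p n kk aa rr hdec σ hσ l
end
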